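/- Let X_1,...,X_n be i.i.d. with density α x^{-α-1}·1{x ≥ 1}, and a_n^α = n^γ log n with γ > 0. Given three vertices, the probability of a path of length two (edges (1,2) and (2,3) present): P(X_1 X_2 > a_n, X_2 X_3 > a_n) is asymptotically 2/(n^γ log n) as n → ∞. -/

import Mathlib

/-!
Given the middle variable `X₂ = c`, the events `X₁ c > a` and `c X₃ > a` are independent with
the same probability `F c = P(X c > a)`, so the probability of the path is `∫ F² dμ`. For the
Pareto law `F c = (c / a) ^ α` on `[1, a]` and `F c = 1` beyond `a`, which gives exactly
`2 a^(-α) - a^(-2α)`. With `a^α = n^γ log n` the normalised probability is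
`2 - 1 / (n^γ log n) → 2`.
-/

open MeasureTheory Filter Real Set

noncomputable def paretoMeasure (α : ℝ) : Measure ℝ :=
  MeasureTheory.volume.withDensity
    (fun x => ENNReal.ofReal (if 1 ≤ x then α * x ^ (-α - 1) else 0))

noncomputable def aSeq (α γ : ℝ) (n : ℕ) : ℝ := ((n : ℝ) ^ γ * Real.log n) ^ (1/α)

open scoped ENNReal

theorem MeasureTheory.Measure.prod_prod_apply_chain {X Y Z : Type*} [MeasurableSpace X]
    [MeasurableSpace Y] [MeasurableSpace Z] (μ : Measure X) (ν : Measure Y) (ρ : Measure Z)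
    [SFinite μ] [SFinite ν] [SFinite ρ] {s : Set (X × Y)} {t : Set (Y × Z)}
    (hs : MeasurableSet s) (ht : MeasurableSet t) :
    μ.prod (ν.prod ρ) {p | (p.1, p.2.1) ∈ s ∧ (p.2.1, p.2.2) ∈ t}
      = ∫⁻ y, μ ((·, y) ⁻¹' s) * ρ (Prod.mk y ⁻¹' t) ∂ν := by
  let g : X × Y → ℝ≥0∞ := fun q => ρ (Prod.mk q.2 ⁻¹' t)
  have hg : Measurable g := (measurable_measure_prodMk_left ht).comp measurable_snd
  have hS : MeasurableSet {p : X × Y × Z | (p.1, p.2.1) ∈ s ∧ (p.2.1, p.2.2) ∈ t} :=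
    (hs.preimage (by fun_prop)).inter (ht.preimage (by fun_prop))
  calc μ.prod (ν.prod ρ) {p | (p.1, p.2.1) ∈ s ∧ (p.2.1, p.2.2) ∈ t}
      = ∫⁻ x, ∫⁻ y, s.indicator g (x, y) ∂ν ∂μ := by
        rw [Measure.prod_apply hS]
        refine lintegral_congr fun x => ?_
        rw [Measure.prod_apply (measurable_prodMk_left hS)]
        refine lintegral_congr fun y => ?_
        by_cases hxy : (x, y) ∈ s <;> simp [hxy, g, preimage]
    _ = ∫⁻ y, ∫⁻ x, s.indicator g (x, y) ∂μ ∂ν :=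
        lintegral_lintegral_swap (hg.indicator hs).aemeasurable
    _ = ∫⁻ y, μ ((·, y) ⁻¹' s) * ρ (Prod.mk y ⁻¹' t) ∂ν := by
        refine lintegral_congr fun y => ?_
        rw [mul_comm, ← lintegral_indicator_const (hs.preimage (by fun_prop))]
        rfl

lemma paretoMeasure_eq_withDensity (α : ℝ) :
    paretoMeasure α
      = (volume.restrict (Ici 1)).withDensity fun x => ENNReal.ofReal (α * x ^ (-α - 1)) := by
  rw [paretoMeasure, ← withDensity_indicator measurableSet_Ici]
  congr 1
  ext x
  by_cases hx : 1 ≤ x <;> simp [hx]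

lemma lintegral_paretoMeasure {α : ℝ} {f : ℝ → ℝ≥0∞} (hf : Measurable f) :
    ∫⁻ x, f x ∂paretoMeasure α = ∫⁻ x in Ici 1, ENNReal.ofReal (α * x ^ (-α - 1)) * f x := by
  rw [paretoMeasure_eq_withDensity, lintegral_withDensity_eq_lintegral_mul _ (by fun_prop) hf]
  rfl

lemma lintegral_Ioi_paretoDensity {α t : ℝ} (hα : 0 < α) (ht : 0 < t) :
    ∫⁻ x in Ioi t, ENNReal.ofReal (α * x ^ (-α - 1)) = ENNReal.ofReal (t ^ (-α)) := by
  rw [← ofReal_integral_eq_lintegral_ofReal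
    ((integrableOn_Ioi_rpow_of_lt (by linarith) ht).const_mul α)]
  · rw [integral_const_mul, integral_Ioi_rpow_of_lt (by linarith) ht, sub_add_cancel]
    field_simp
  · filter_upwards [ae_restrict_mem measurableSet_Ioi] with x hx
    have : 0 < x := ht.trans hx
    positivity

lemma paretoMeasure_Ioi {α t : ℝ} (hα : 0 < α) (ht : 1 ≤ t) :
    paretoMeasure α (Ioi t) = ENNReal.ofReal (t ^ (-α)) := by
  rw [paretoMeasure_eq_withDensity, withDensity_apply _ measurableSet_Ioi,
    Measure.restrict_restrict measurableSet_Ioi,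
    inter_eq_left.2 (Ioi_subset_Ici_self.trans (Ici_subset_Ici.2 ht)),
    lintegral_Ioi_paretoDensity hα (zero_lt_one.trans_le ht)]

lemma isProbabilityMeasure_paretoMeasure {α : ℝ} (hα : 0 < α) :
    IsProbabilityMeasure (paretoMeasure α) := by
  constructor
  rw [paretoMeasure_eq_withDensity, withDensity_apply _ MeasurableSet.univ,
    Measure.restrict_univ, ← setLIntegral_congr Ioi_ae_eq_Ici,
    lintegral_Ioi_paretoDensity hα zero_lt_one, one_rpow, ENNReal.ofReal_one]

lemma paretoMeasure_Ioi_of_le_one {α t : ℝ} (hα : 0 < α) (ht : t ≤ 1) :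
    paretoMeasure α (Ioi t) = 1 := by
  have := isProbabilityMeasure_paretoMeasure hα
  refine le_antisymm prob_le_one ?_
  calc 1 = paretoMeasure α (Ioi 1) := by
        rw [paretoMeasure_Ioi hα le_rfl, one_rpow, ENNReal.ofReal_one]
    _ ≤ paretoMeasure α (Ioi t) := measure_mono (Ioi_subset_Ioi ht)

lemma paretoMeasure_lt_mul {α a c : ℝ} (hα : 0 < α) (hc : 1 ≤ c) (hca : c ≤ a) :
    paretoMeasure α {x | a < x * c} = ENNReal.ofReal (a ^ (-α) * c ^ α) := by
  have hc0 : 0 < c := zero_lt_one.trans_le hc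
  have : {x | a < x * c} = Ioi (a / c) := by ext x; simp [div_lt_iff₀ hc0]
  rw [this, paretoMeasure_Ioi hα ((one_le_div hc0).2 hca),
    div_rpow (hc0.le.trans hca) hc0.le, rpow_neg hc0.le, div_inv_eq_mul]

lemma paretoMeasure_lt_mul_of_le {α a c : ℝ} (hα : 0 < α) (hc : 0 < c) (hac : a ≤ c) :
    paretoMeasure α {x | a < x * c} = 1 := by
  have : {x | a < x * c} = Ioi (a / c) := by ext x; simp [div_lt_iff₀ hc]
  rw [this, paretoMeasure_Ioi_of_le_one hα ((div_le_one hc).2 hac)]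

lemma setLIntegral_Icc_paretoDensity_mul_sq {α a : ℝ} (hα : 0 < α) (ha : 1 ≤ a) :
    ∫⁻ c in Icc 1 a, ENNReal.ofReal (α * c ^ (-α - 1)) * paretoMeasure α {x | a < x * c} ^ 2
      = ENNReal.ofReal (a ^ (-α) - (a ^ (-α)) ^ 2) := by
  have ha0 : 0 < a := zero_lt_one.trans_le ha
  set b := a ^ (-α)
  have hf : ContinuousOn (fun c : ℝ => α * b ^ 2 * c ^ (α - 1)) (Icc 1 a) :=
    continuousOn_const.mul fun c hc =>
      (continuousAt_rpow_const c _ (Or.inl (zero_lt_one.trans_le hc.1).ne')).continuousWithinAt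
  calc ∫⁻ c in Icc 1 a, ENNReal.ofReal (α * c ^ (-α - 1)) * paretoMeasure α {x | a < x * c} ^ 2
      = ∫⁻ c in Icc 1 a, ENNReal.ofReal (α * b ^ 2 * c ^ (α - 1)) := by
        refine setLIntegral_congr_fun measurableSet_Icc fun c hc => ?_
        have hc0 : 0 < c := zero_lt_one.trans_le hc.1
        rw [paretoMeasure_lt_mul hα hc.1 hc.2, ← ENNReal.ofReal_pow (by positivity),
          ← ENNReal.ofReal_mul (by positivity)]
        congr 1
        have : c ^ (-α - 1) * (c ^ α) ^ 2 = c ^ (α - 1) := by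
          rw [← rpow_natCast, ← rpow_mul hc0.le, ← rpow_add hc0]
          ring_nf
        linear_combination α * b ^ 2 * this
    _ = ENNReal.ofReal (∫ c in Icc 1 a, α * b ^ 2 * c ^ (α - 1)) := by
        refine (ofReal_integral_eq_lintegral_ofReal (hf.integrableOn_compact isCompact_Icc) ?_).symm
        filter_upwards [ae_restrict_mem measurableSet_Icc] with c hc
        have : 0 < c := zero_lt_one.trans_le hc.1
        positivity
    _ = ENNReal.ofReal (b - b ^ 2) := by
        have hab : b * a ^ α = 1 := by rw [← rpow_add ha0, neg_add_cancel, rpow_zero]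
        rw [integral_Icc_eq_integral_Ioc, ← intervalIntegral.integral_of_le ha,
          intervalIntegral.integral_const_mul, integral_rpow (Or.inl (by linarith)),
          sub_add_cancel, one_rpow]
        congr 1
        field_simp
        linear_combination b * hab

lemma setLIntegral_Ioi_paretoDensity_mul_sq {α a : ℝ} (hα : 0 < α) (ha : 0 < a) :
    ∫⁻ c in Ioi a, ENNReal.ofReal (α * c ^ (-α - 1)) * paretoMeasure α {x | a < x * c} ^ 2
      = ENNReal.ofReal (a ^ (-α)) := by
  rw [← lintegral_Ioi_paretoDensity hα ha]
  refine setLIntegral_congr_fun measurableSet_Ioi fun c hc => ?_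
  rw [paretoMeasure_lt_mul_of_le hα (ha.trans hc) hc.le, one_pow, mul_one]

lemma lintegral_paretoMeasure_lt_mul_sq {α a : ℝ} (hα : 0 < α) (ha : 1 ≤ a) :
    ∫⁻ c, paretoMeasure α {x | a < x * c} ^ 2 ∂paretoMeasure α
      = ENNReal.ofReal (2 * a ^ (-α) - (a ^ (-α)) ^ 2) := by
  have := isProbabilityMeasure_paretoMeasure hα
  have hF : Measurable fun c => paretoMeasure α {x | a < x * c} ^ 2 :=
    (measurable_measure_prodMk_right (measurableSet_lt measurable_const (by fun_prop)
      : MeasurableSet {q : ℝ × ℝ | a < q.1 * q.2})).pow_const 2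
  have hb : (a ^ (-α)) ^ 2 ≤ a ^ (-α) := pow_le_of_le_one (by positivity)
    (rpow_le_one_of_one_le_of_nonpos ha (by linarith)) two_ne_zero
  rw [lintegral_paretoMeasure hF, ← Icc_union_Ioi_eq_Ici ha,
    lintegral_union measurableSet_Ioi ((Iic_disjoint_Ioi le_rfl).mono_left Icc_subset_Iic_self),
    setLIntegral_Icc_paretoDensity_mul_sq hα ha,
    setLIntegral_Ioi_paretoDensity_mul_sq hα (zero_lt_one.trans_le ha),
    ← ENNReal.ofReal_add (by linarith) (by positivity)]
  ring_nf

lemma paretoMeasure_prod_path {α a : ℝ} (hα : 0 < α) (ha : 1 ≤ a) :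
    ((paretoMeasure α).prod ((paretoMeasure α).prod (paretoMeasure α)))
        {p : ℝ × ℝ × ℝ | p.1 * p.2.1 > a ∧ p.2.1 * p.2.2 > a}
      = ENNReal.ofReal (2 * a ^ (-α) - (a ^ (-α)) ^ 2) := by
  have := isProbabilityMeasure_paretoMeasure hα
  have hs : MeasurableSet {q : ℝ × ℝ | a < q.1 * q.2} :=
    measurableSet_lt measurable_const (by fun_prop)
  rw [← lintegral_paretoMeasure_lt_mul_sq hα ha]
  refine (Measure.prod_prod_apply_chain _ _ _ hs hs).trans (lintegral_congr fun c => ?_)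
  simp only [preimage_ofPred_eq, mul_comm c, sq]

theorem stmt11 (α γ : ℝ) (hα : 0 < α) (hγ : 0 < γ) :
    Tendsto (fun n : ℕ =>
      (n : ℝ) ^ γ * Real.log n *
        (((paretoMeasure α).prod ((paretoMeasure α).prod (paretoMeasure α)))
          {p : ℝ × ℝ × ℝ | p.1 * p.2.1 > aSeq α γ n ∧ p.2.1 * p.2.2 > aSeq α γ n}).toReal)
      atTop (nhds 2) := by
  set L : ℕ → ℝ := fun n => (n : ℝ) ^ γ * Real.log n
  have hL : Tendsto L atTop atTop :=
    ((tendsto_rpow_atTop hγ).atTop_mul_atTop₀ tendsto_log_atTop).comp tendsto_natCast_atTop_atTop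
  have haSeq : ∀ n, aSeq α γ n ^ (-α) = (L n)⁻¹ := fun n => by
    rw [aSeq, ← rpow_mul (by positivity), one_div, inv_mul_eq_div, neg_div_self hα.ne', rpow_neg_one]
  have hlim : Tendsto (fun n => 2 - (L n)⁻¹) atTop (nhds 2) := by
    simpa using tendsto_const_nhds.sub hL.inv_tendsto_atTop
  refine hlim.congr' ?_
  filter_upwards [hL.eventually_ge_atTop 1] with n hn
  show 2 - (L n)⁻¹ = L n * _
  have ha : 1 ≤ aSeq α γ n := one_le_rpow hn (by positivity)
  have hb : 0 ≤ 2 * (L n)⁻¹ - ((L n)⁻¹) ^ 2 := by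
    nlinarith [inv_le_one_of_one_le₀ hn, inv_pos.2 (zero_lt_one.trans_le hn)]
  rw [paretoMeasure_prod_path hα ha, haSeq, ENNReal.toReal_ofReal hb]
  field_simp
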